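/- arXiv:1909.07236 — 2 statements merged into one kernel-verified Lean document; each statement's English description precedes it below -/
import Mathlib

section
/- Let X be a Banach space and F : ℝ → X a Bochner integrable function with ∫_ℝ F = 0 and |F(x)|_X ≤ Λ⟨R(x−x₀)⟩^{−100} for all x (Λ, R > 0, x₀ ∈ ℝ). Define Φ(x) = ∫_{−∞}^x F(t)dt. Then Φ vanishes at ±∞ and satisfies |Φ(x)|_X ≤ C Λ R^{−1} ⟨R(x−x₀)⟩^{−99} for all x ∈ ℝ, with an absolute constant C. -/
/-!
Where `x ≥ x₀`, the mean-zero hypothesis turns `Φ(x)` into `-∫_x^∞ F`; where `x ≤ x₀`, reflecting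
`t ↦ -t` turns `Φ(x) = ∫_{-∞}^x F` into a right tail as well. So it suffices to bound a tail of
`Λ ⟨R(t - x₀)⟩^{-100}` lying on one side of `x₀`. Rescaling makes this `Λ R⁻¹ ∫_c^∞ (1 + u²)^{-50}`
with `c = R|x - x₀|`. For `u ≥ c ≥ 0` we have `1 + u² ≥ ⟨c⟩² + (u - c)²`, and substituting
`u - c = ⟨c⟩ s` bounds the tail by `⟨c⟩^{-99} ∫ (1 + s²)^{-1} = π ⟨c⟩^{-99}`. The limits at `±∞`
follow from exhausting `ℝ` by half-lines `(-∞, x]`.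
-/

open MeasureTheory Filter Set Real

theorem integral_Ioi_comp_sub_right {E : Type*} [NormedAddCommGroup E] [NormedSpace ℝ E]
    (g : ℝ → E) (a d : ℝ) : ∫ x in Ioi a, g (x - d) = ∫ x in Ioi (a - d), g x := by
  rw [← integral_indicator measurableSet_Ioi, ← integral_indicator measurableSet_Ioi,
    ← integral_sub_right_eq_self ((Ioi (a - d)).indicator g) d]
  congr 1 with x
  simp only [indicator_apply, mem_Ioi, sub_lt_sub_iff_right]

section ModelDecay

variable {n : ℕ}

theorem integrable_inv_add_sq_pow {β : ℝ} (hβ : 1 ≤ β) (hn : n ≠ 0) :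
    Integrable fun u : ℝ => ((β + u ^ 2) ^ n)⁻¹ := by
  refine integrable_inv_one_add_sq.mono' (by fun_prop (disch := positivity)) ?_
  filter_upwards with u
  rw [norm_of_nonneg (by positivity)]
  gcongr
  calc 1 + u ^ 2 ≤ β + u ^ 2 := by linarith
    _ ≤ (β + u ^ 2) ^ n := le_self_pow₀ (by nlinarith) hn

theorem integral_Ioi_zero_inv_one_add_sq_pow_le (hn : n ≠ 0) :
    ∫ t in Ioi (0 : ℝ), ((1 + t ^ 2) ^ n)⁻¹ ≤ π := calc
  _ ≤ ∫ t in Ioi (0 : ℝ), (1 + t ^ 2)⁻¹ := by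
    refine setIntegral_mono_on (integrable_inv_add_sq_pow le_rfl hn).integrableOn
      integrable_inv_one_add_sq.integrableOn measurableSet_Ioi fun t _ => ?_
    gcongr
    exact le_self_pow₀ (by nlinarith) hn
  _ ≤ ∫ t, (1 + t ^ 2)⁻¹ :=
    setIntegral_le_integral integrable_inv_one_add_sq (.of_forall fun t => by positivity)
  _ = π := integral_univ_inv_one_add_sq

theorem integral_Ioi_zero_inv_sq_add_sq_pow {b : ℝ} (hb : 0 < b) :
    ∫ s in Ioi (0 : ℝ), ((b ^ 2 + s ^ 2) ^ n)⁻¹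
      = b / b ^ (2 * n) * ∫ t in Ioi (0 : ℝ), ((1 + t ^ 2) ^ n)⁻¹ := by
  have hscale : ∀ t, ((b ^ 2 + (b * t) ^ 2) ^ n)⁻¹ = (b ^ (2 * n))⁻¹ * ((1 + t ^ 2) ^ n)⁻¹ := by
    intro t
    rw [← mul_inv, pow_mul, ← mul_pow]
    ring_nf
  have h := integral_comp_mul_left_Ioi' (fun s => ((b ^ 2 + s ^ 2) ^ n)⁻¹) 0 hb
  simp only [hscale, mul_zero, integral_const_mul, smul_eq_mul] at h
  rw [← h, div_eq_mul_inv, mul_assoc]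

theorem integral_Ioi_inv_one_add_sq_pow_le (hn : n ≠ 0) {c : ℝ} (hc : 0 ≤ c) :
    ∫ u in Ioi c, ((1 + u ^ 2) ^ n)⁻¹ ≤ π * (√(1 + c ^ 2) ^ (2 * n - 1))⁻¹ := by
  set b := √(1 + c ^ 2)
  have hb2 : b ^ 2 = 1 + c ^ 2 := sq_sqrt (by positivity)
  have hb : 0 < b := by positivity
  have hdom : ∀ u ∈ Ioi c, ((1 + u ^ 2) ^ n)⁻¹ ≤ ((b ^ 2 + (u - c) ^ 2) ^ n)⁻¹ := by
    intro u (hu : c < u)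
    refine inv_anti₀ (by positivity) (pow_le_pow_left₀ (by positivity) ?_ n)
    nlinarith
  have hint : Integrable fun u => ((b ^ 2 + (u - c) ^ 2) ^ n)⁻¹ :=
    (integrable_inv_add_sq_pow (by nlinarith) hn).comp_sub_right c
  calc ∫ u in Ioi c, ((1 + u ^ 2) ^ n)⁻¹
      ≤ ∫ u in Ioi c, ((b ^ 2 + (u - c) ^ 2) ^ n)⁻¹ :=
        setIntegral_mono_on (integrable_inv_add_sq_pow le_rfl hn).integrableOn
          hint.integrableOn measurableSet_Ioi hdom
    _ = b / b ^ (2 * n) * ∫ t in Ioi (0 : ℝ), ((1 + t ^ 2) ^ n)⁻¹ := by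
        rw [integral_Ioi_comp_sub_right (fun s => ((b ^ 2 + s ^ 2) ^ n)⁻¹), sub_self,
          integral_Ioi_zero_inv_sq_add_sq_pow hb]
    _ ≤ b / b ^ (2 * n) * π := by gcongr; exact integral_Ioi_zero_inv_one_add_sq_pow_le hn
    _ = π * (b ^ (2 * n - 1))⁻¹ := by
        rw [← pow_sub_one_mul (by omega) b]
        field_simp

end ModelDecay

theorem sqrt_rpow_neg_two_mul {a : ℝ} (ha : 0 ≤ a) (k : ℕ) : √a ^ (-(2 * k : ℝ)) = (a ^ k)⁻¹ := by
  rw [rpow_neg (sqrt_nonneg a), ← Nat.cast_ofNat, ← Nat.cast_mul, rpow_natCast, pow_mul,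
    sq_sqrt ha]

section AntiderivativeDecay

variable {X : Type*} [NormedAddCommGroup X] [NormedSpace ℝ X] {F : ℝ → X} {Λ R x₀ : ℝ} {n : ℕ}

theorem norm_integral_Ioi_le_of_decay (hn : n ≠ 0) (hR : 0 < R)
    (hF : ∀ t, ‖F t‖ ≤ Λ * ((1 + (R * (t - x₀)) ^ 2) ^ n)⁻¹) {x : ℝ} (hx : x₀ ≤ x) :
    ‖∫ t in Ioi x, F t‖ ≤ π * Λ * R⁻¹ * (√(1 + (R * (x - x₀)) ^ 2) ^ (2 * n - 1))⁻¹ := by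
  have hΛ : 0 ≤ Λ := by simpa using (norm_nonneg _).trans (hF x₀)
  have hint : Integrable fun t => ((1 + (R * (t - x₀)) ^ 2) ^ n)⁻¹ :=
    ((integrable_inv_add_sq_pow le_rfl hn).comp_mul_left' hR.ne').comp_sub_right x₀
  have hsubst : ∫ t in Ioi x, ((1 + (R * (t - x₀)) ^ 2) ^ n)⁻¹
      = R⁻¹ * ∫ u in Ioi (R * (x - x₀)), ((1 + u ^ 2) ^ n)⁻¹ := by
    rw [integral_Ioi_comp_sub_right (fun s => ((1 + (R * s) ^ 2) ^ n)⁻¹),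
      integral_comp_mul_left_Ioi (fun u => ((1 + u ^ 2) ^ n)⁻¹) _ hR, smul_eq_mul]
  calc ‖∫ t in Ioi x, F t‖
      ≤ ∫ t in Ioi x, Λ * ((1 + (R * (t - x₀)) ^ 2) ^ n)⁻¹ :=
        norm_integral_le_of_norm_le (hint.const_mul Λ).integrableOn (ae_of_all _ hF)
    _ = Λ * (R⁻¹ * ∫ u in Ioi (R * (x - x₀)), ((1 + u ^ 2) ^ n)⁻¹) := by
        rw [integral_const_mul, hsubst]
    _ ≤ Λ * (R⁻¹ * (π * (√(1 + (R * (x - x₀)) ^ 2) ^ (2 * n - 1))⁻¹)) := by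
        gcongr
        exact integral_Ioi_inv_one_add_sq_pow_le hn (mul_nonneg hR.le (sub_nonneg.2 hx))
    _ = π * Λ * R⁻¹ * (√(1 + (R * (x - x₀)) ^ 2) ^ (2 * n - 1))⁻¹ := by ring

theorem norm_integral_Iic_le_of_decay (hn : n ≠ 0) (hR : 0 < R)
    (hF : ∀ t, ‖F t‖ ≤ Λ * ((1 + (R * (t - x₀)) ^ 2) ^ n)⁻¹) {x : ℝ} (hx : x ≤ x₀) :
    ‖∫ t in Iic x, F t‖ ≤ π * Λ * R⁻¹ * (√(1 + (R * (x - x₀)) ^ 2) ^ (2 * n - 1))⁻¹ := by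
  have hreflect : ∀ t, ‖F (-t)‖ ≤ Λ * ((1 + (R * (t - -x₀)) ^ 2) ^ n)⁻¹ := fun t => by
    simpa [show R * (-t - x₀) = -(R * (t - -x₀)) by ring] using hF (-t)
  have h := norm_integral_Ioi_le_of_decay hn hR hreflect (neg_le_neg hx)
  rwa [integral_comp_neg_Ioi, neg_neg, show R * (-x - -x₀) = -(R * (x - x₀)) by ring,
    neg_sq] at h

theorem norm_integral_Iic_le_of_decay_of_integral_eq_zero (hn : n ≠ 0) (hR : 0 < R)
    (hFi : Integrable F) (hmean : ∫ t, F t = 0)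
    (hF : ∀ t, ‖F t‖ ≤ Λ * ((1 + (R * (t - x₀)) ^ 2) ^ n)⁻¹) (x : ℝ) :
    ‖∫ t in Iic x, F t‖ ≤ π * Λ * R⁻¹ * (√(1 + (R * (x - x₀)) ^ 2) ^ (2 * n - 1))⁻¹ := by
  rcases le_total x x₀ with hx | hx
  · exact norm_integral_Iic_le_of_decay hn hR hF hx
  · have hsplit := integral_add_compl (measurableSet_Iic (a := x)) hFi
    rw [compl_Iic, hmean] at hsplit
    rw [eq_neg_of_add_eq_zero_left hsplit, norm_neg]
    exact norm_integral_Ioi_le_of_decay hn hR hF hx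

end AntiderivativeDecay

/-- Decay of the antiderivative of a mean-zero function with scale-`R⁻¹` decay. -/
theorem stmt15 :
    ∃ C : ℝ, 0 < C ∧
    ∀ (X : Type) [NormedAddCommGroup X] [NormedSpace ℝ X] [CompleteSpace X],
    ∀ (F : ℝ → X) (Λ R x₀ : ℝ), 0 < Λ → 0 < R →
      Integrable F volume → (∫ x : ℝ, F x) = 0 →
      (∀ x : ℝ, ‖F x‖ ≤ Λ * (Real.sqrt (1 + (R * (x - x₀)) ^ 2)) ^ (-(100 : ℝ))) →
      Tendsto (fun x : ℝ => ∫ t in Set.Iic x, F t) atBot (nhds 0) ∧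
      Tendsto (fun x : ℝ => ∫ t in Set.Iic x, F t) atTop (nhds 0) ∧
      ∀ x : ℝ, ‖∫ t in Set.Iic x, F t‖ ≤
        C * Λ * R⁻¹ * (Real.sqrt (1 + (R * (x - x₀)) ^ 2)) ^ (-(99 : ℝ)) := by
  refine ⟨π, pi_pos, fun X _ _ _ F Λ R x₀ _ hR hFi hmean hF =>
    ⟨tendsto_integral_Iic_zero tendsto_id, ?_, fun x => ?_⟩⟩
  · simpa [hmean] using (aecover_Iic tendsto_id).integral_tendsto_of_countably_generated hFi
  · have hF50 : ∀ t, ‖F t‖ ≤ Λ * ((1 + (R * (t - x₀)) ^ 2) ^ 50)⁻¹ := fun t => by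
      simpa [← sqrt_rpow_neg_two_mul (by positivity : 0 ≤ 1 + (R * (t - x₀)) ^ 2) 50,
        show (2 * 50 : ℝ) = 100 by norm_num] using hF t
    have h := norm_integral_Iic_le_of_decay_of_integral_eq_zero (by norm_num) hR hFi hmean hF50 x
    rwa [rpow_neg (sqrt_nonneg _), show (99 : ℝ) = ((2 * 50 - 1 : ℕ) : ℝ) by norm_num,
      rpow_natCast]
end

section
/- Let X be a Banach space and g ∈ L^∞(ℝ;X) ∩ L^{1,∞}-locally controlled in the following sense: for every interval K there is a constant a_K ∈ X with ‖1_K(g − a_K)‖_{L^{1,∞}(ℝ;X)} ≤ λ|K|. Then ‖g‖_{BMO(ℝ;X)} ≤ Cλ for an absolute constant C, where ‖g‖_{BMO} = sup_K inf_{c∈X} (1/|K|)∫_K |g − c|_X (suprema over all intervals K). (John–Strömberg inequality, vector-valued, d = 1.) -/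
/-!
Fix the dyadic grid of `[a, b)` and, for every dyadic cell `Q`, the constant `c_Q` given by the
hypothesis, so that `|g - c_Q| > s` on at most a quarter of `Q` once `s ≥ 4λ`. Let `A` be the
supremum over all cells of `(1/|Q|) ∫_Q |g - c_Q|`; it is finite because `g` is bounded. In a cell
`Q`, the maximal dyadic subcells in which `B = {|g - c_Q| > s}` has density `> 1/2` cover `B`
up to a null set (Lebesgue density) and have total length at most `2|B| ≤ |Q|/2`; comparing
constants through the parent cell shows that their constants are within `4s` of `c_Q`. Hence
`∫_Q |g - c_Q| ≤ (3s + A/2)|Q|`, so `A ≤ 6s`, and letting `s ↓ 4λ` gives the constant `24`.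
-/

open MeasureTheory Set Filter Topology ENNReal Function

lemma add_lt_of_four_mul_le_of_two_mul_le {a b c : ℝ≥0∞} (hc0 : c ≠ 0) (hc : c ≠ ∞)
    (ha : 4 * a ≤ c) (hb : 2 * b ≤ c) : a + b < c := by
  have ha_top : a ≠ ∞ := fun h => by simp [h] at ha; exact hc ha
  have hb_top : b ≠ ∞ := fun h => by simp [h] at hb; exact hc hb
  have ha' := ENNReal.toReal_mono hc ha
  have hb' := ENNReal.toReal_mono hc hb
  simp only [ENNReal.toReal_mul, ENNReal.toReal_ofNat] at ha' hb'
  rw [← ENNReal.toReal_lt_toReal (add_ne_top.mpr ⟨ha_top, hb_top⟩) hc, toReal_add ha_top hb_top]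
  linarith [ENNReal.toReal_pos hc0 hc]

lemma norm_sub_le_of_measure_add_lt {α X : Type*} [MeasurableSpace α] [SeminormedAddCommGroup X]
    {μ : Measure α} {S : Set α} {f : α → X} {c c' : X} {s s' : ℝ}
    (h : μ {x ∈ S | s < ‖f x - c‖} + μ {x ∈ S | s' < ‖f x - c'‖} < μ S) : ‖c - c'‖ ≤ s + s' := by
  by_contra hcc
  refine (measure_mono fun x hx => ?_).trans (measure_union_le _ _) |>.not_gt h
  by_contra hx'
  simp only [mem_union, mem_ofPred_eq, hx, true_and, not_or, not_lt] at hx'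
  exact hcc <| calc ‖c - c'‖ = ‖(f x - c') - (f x - c)‖ := by congr 1; abel
    _ ≤ ‖f x - c'‖ + ‖f x - c‖ := norm_sub_le _ _
    _ ≤ s + s' := by linarith [hx'.1, hx'.2]

namespace JohnStromberg

variable {a h : ℝ} {m n : ℕ} {x y : ℝ}

noncomputable def dyadicIndex (a h : ℝ) (m : ℕ) (x : ℝ) : ℤ := ⌊(x - a) * 2 ^ m / h⌋

noncomputable def dyadicCell (a h : ℝ) (m : ℕ) (x : ℝ) : Set ℝ :=
  dyadicIndex a h m ⁻¹' {dyadicIndex a h m x}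

lemma mem_dyadicCell_self : x ∈ dyadicCell a h m x := rfl

lemma dyadicCell_eq_of_mem (hy : y ∈ dyadicCell a h m x) :
    dyadicCell a h m y = dyadicCell a h m x := by
  simp only [dyadicCell, mem_preimage, mem_singleton_iff] at hy ⊢
  rw [hy]

lemma measurable_dyadicIndex : Measurable (dyadicIndex a h m) :=
  Int.measurable_floor.comp (by fun_prop)

lemma measurableSet_dyadicCell : MeasurableSet (dyadicCell a h m x) :=
  measurable_dyadicIndex (measurableSet_singleton _)

lemma dyadicIndex_succ_div_two :
    dyadicIndex a h (m + 1) x / 2 = dyadicIndex a h m x := by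
  have := Int.floor_div_natCast ((x - a) * 2 ^ (m + 1) / h) 2
  push_cast at this
  rw [dyadicIndex, dyadicIndex, ← this]
  congr 1
  ring

lemma dyadicCell_succ_subset :
    dyadicCell a h (m + 1) x ⊆ dyadicCell a h m x := fun y hy => by
  simp only [dyadicCell, mem_preimage, mem_singleton_iff] at hy ⊢
  rw [← dyadicIndex_succ_div_two, hy, dyadicIndex_succ_div_two]

lemma dyadicCell_subset_of_le (hmn : m ≤ n) :
    dyadicCell a h n x ⊆ dyadicCell a h m x := by
  induction n, hmn using Nat.le_induction with
  | base => exact subset_rfl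
  | succ n _ ih => exact (dyadicCell_succ_subset).trans ih

lemma dyadicCell_eq_Ico (hh : 0 < h) (m : ℕ) (x : ℝ) :
    dyadicCell a h m x = Ico (a + dyadicIndex a h m x * h / 2 ^ m)
      (a + (dyadicIndex a h m x + 1) * h / 2 ^ m) := by
  ext y
  have h2 : (0 : ℝ) < 2 ^ m := by positivity
  change ⌊(y - a) * 2 ^ m / h⌋ = dyadicIndex a h m x ↔ _
  rw [Int.floor_eq_iff, le_div_iff₀ hh, div_lt_iff₀ hh, mem_Ico, ← le_sub_iff_add_le',
    ← sub_lt_iff_lt_add', div_le_iff₀ h2, lt_div_iff₀ h2]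

lemma volume_dyadicCell (hh : 0 < h) (m : ℕ) (x : ℝ) :
    volume (dyadicCell a h m x) = ENNReal.ofReal (h / 2 ^ m) := by
  rw [dyadicCell_eq_Ico hh, Real.volume_Ico]
  congr 1
  ring

lemma volume_dyadicCell_ne_zero (hh : 0 < h) : volume (dyadicCell a h m x) ≠ 0 := by
  rw [volume_dyadicCell hh]
  exact ENNReal.ofReal_pos.mpr (by positivity) |>.ne'

lemma volume_dyadicCell_ne_top (hh : 0 < h) : volume (dyadicCell a h m x) ≠ ∞ := by
  rw [volume_dyadicCell hh]
  exact ENNReal.ofReal_ne_top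

lemma volume_dyadicCell_succ (hh : 0 < h) :
    volume (dyadicCell a h m x) = 2 * volume (dyadicCell a h (m + 1) x) := by
  rw [volume_dyadicCell hh, volume_dyadicCell hh, ← ENNReal.ofReal_ofNat,
    ← ENNReal.ofReal_mul zero_le_two, pow_succ]
  congr 1
  field_simp

lemma dyadicCell_subset_closedBall (hh : 0 < h) :
    dyadicCell a h m x ⊆ Metric.closedBall x (h / 2 ^ m) := by
  intro y hy
  have hx : x ∈ dyadicCell a h m x := mem_dyadicCell_self
  rw [dyadicCell_eq_Ico hh, add_mul, one_mul, add_div, ← add_assoc] at hx hy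
  rw [Real.closedBall_eq_Icc]
  constructor <;> linarith [hx.1, hx.2, hy.1, hy.2]

lemma dyadicCell_zero_self (hh : 0 < h) : dyadicCell a h 0 a = Ico a (a + h) := by
  have : dyadicIndex a h 0 a = 0 := by simp [dyadicIndex]
  rw [dyadicCell_eq_Ico hh, this]
  simp

lemma preimage_image_dyadicIndex {S : Set ℝ} (hS : ∀ x ∈ S, dyadicCell a h m x ⊆ S) :
    dyadicIndex a h m ⁻¹' (dyadicIndex a h m '' S) = S := by
  refine subset_antisymm ?_ (subset_preimage_image _ _)
  rintro y ⟨x, hx, hxy⟩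
  exact hS x hx hxy.symm

lemma measurableSet_of_dyadicCell_subset {S : Set ℝ} (hS : ∀ x ∈ S, dyadicCell a h m x ⊆ S) :
    MeasurableSet S :=
  preimage_image_dyadicIndex hS ▸ measurable_dyadicIndex (Set.to_countable _).measurableSet

lemma measure_le_of_forall_dyadicCell {μ ν : Measure ℝ} {S : Set ℝ}
    (hS : ∀ x ∈ S, dyadicCell a h m x ⊆ S)
    (hμν : ∀ x ∈ S, μ (dyadicCell a h m x) ≤ ν (dyadicCell a h m x)) : μ S ≤ ν S := by
  have hfib : ∀ k, MeasurableSet (dyadicIndex a h m ⁻¹' {k}) :=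
    fun k => measurable_dyadicIndex (measurableSet_singleton k)
  rw [← preimage_image_dyadicIndex hS, ← tsum_measure_preimage_singleton (Set.to_countable _)
    (fun k _ => hfib k), ← tsum_measure_preimage_singleton (Set.to_countable _) (fun k _ => hfib k)]
  refine ENNReal.tsum_le_tsum fun ⟨_, x, hx, hxk⟩ => ?_
  subst hxk
  exact hμν x hx

lemma measure_iUnion_le_of_forall_dyadicCell {μ ν : Measure ℝ} {S : ℕ → Set ℝ}
    (hS : ∀ m, ∀ x ∈ S m, dyadicCell a h m x ⊆ S m) (hdisj : Pairwise (Disjoint on S))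
    (hμν : ∀ m, ∀ x ∈ S m, μ (dyadicCell a h m x) ≤ ν (dyadicCell a h m x)) :
    μ (⋃ m, S m) ≤ ν (⋃ m, S m) := by
  have hmeas m := measurableSet_of_dyadicCell_subset (hS m)
  rw [measure_iUnion hdisj hmeas, measure_iUnion hdisj hmeas]
  exact ENNReal.tsum_le_tsum fun m => measure_le_of_forall_dyadicCell (hS m) (hμν m)


lemma tendsto_div_two_pow_nhdsGT (hh : 0 < h) :
    Tendsto (fun m : ℕ => h / 2 ^ m) atTop (𝓝[>] 0) :=
  tendsto_nhdsWithin_iff.mpr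
    ⟨tendsto_const_nhds.div_atTop (tendsto_pow_atTop_atTop_of_one_lt one_lt_two),
      Eventually.of_forall fun m => mem_Ioi.mpr (by positivity)⟩

lemma ae_eventually_volume_lt_two_mul_inter (hh : 0 < h) (B : Set ℝ) :
    ∀ᵐ x ∂volume.restrict B, ∀ᶠ m in atTop,
      volume (dyadicCell a h m x) < 2 * volume (dyadicCell a h m x ∩ B) := by
  filter_upwards [Besicovitch.ae_tendsto_measure_inter_div volume B] with x hx
  have hdense := (hx.comp (tendsto_div_two_pow_nhdsGT hh)).eventually
    (lt_mem_nhds (ENNReal.ofReal_lt_one.mpr (by norm_num : (3 / 4 : ℝ) < 1)))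
  filter_upwards [hdense] with m hm
  set r := h / 2 ^ m
  set C := dyadicCell a h m x
  have hr : 0 < r := by positivity
  have hC : volume C = ENNReal.ofReal r := volume_dyadicCell hh m x
  have hball : volume (Metric.closedBall x r) = ENNReal.ofReal (2 * r) := Real.volume_closedBall x r
  have hCball : C ⊆ Metric.closedBall x r := dyadicCell_subset_closedBall hh
  -- `B` fills more than `3/4` of the ball, and the ball is twice as large as `C`
  have h34 : ENNReal.ofReal (3 / 2 * r) < volume (C ∩ B) + ENNReal.ofReal r :=
    calc ENNReal.ofReal (3 / 2 * r) = ENNReal.ofReal (3 / 4) * volume (Metric.closedBall x r) := by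
          rw [hball, ← ENNReal.ofReal_mul (by norm_num)]; ring_nf
      _ < volume (B ∩ Metric.closedBall x r) := by
          change _ < volume (B ∩ Metric.closedBall x r) / volume (Metric.closedBall x r) at hm
          rwa [ENNReal.lt_div_iff_mul_lt (Or.inl (by simp [hball, hr]))
            (Or.inl (by simp [hball, ENNReal.mul_eq_top]))] at hm
      _ ≤ volume (C ∩ B) + volume (Metric.closedBall x r \ C) := by
          refine (measure_mono fun y hy => ?_).trans (measure_union_le _ _)
          by_cases hyC : y ∈ C
          exacts [Or.inl ⟨hyC, hy.1⟩, Or.inr ⟨hy.2, hyC⟩]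
      _ = volume (C ∩ B) + ENNReal.ofReal r := by
          rw [measure_sdiff hCball measurableSet_dyadicCell.nullMeasurableSet (by simp [hC]), hball,
            hC, ← ENNReal.ofReal_sub _ hr.le]
          ring_nf
  have hhalf : ENNReal.ofReal (r / 2) < volume (C ∩ B) := by
    have := ENNReal.sub_lt_of_lt_add (ENNReal.ofReal_le_ofReal (by linarith)) h34
    rwa [← ENNReal.ofReal_sub _ hr.le, show 3 / 2 * r - r = r / 2 by ring] at this
  calc volume C = 2 * ENNReal.ofReal (r / 2) := by
        rw [hC, ← ENNReal.ofReal_ofNat, ← ENNReal.ofReal_mul zero_le_two]; ring_nf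
    _ < 2 * volume (C ∩ B) := (ENNReal.mul_lt_mul_iff_right two_ne_zero ofNat_ne_top).mpr hhalf

/-- The level-`m` cells of the Calderón–Zygmund (stopping-time) decomposition of `B` at
density `1/2`, started at level `n`. -/
def stoppingSet (a h : ℝ) (B : Set ℝ) (n m : ℕ) : Set ℝ :=
  {x | n < m ∧ volume (dyadicCell a h m x) < 2 * volume (dyadicCell a h m x ∩ B) ∧
    ∀ j, n ≤ j → j < m → 2 * volume (dyadicCell a h j x ∩ B) ≤ volume (dyadicCell a h j x)}

section Stopping

variable {B : Set ℝ} {x₀ : ℝ}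

lemma dyadicCell_subset_stoppingSet (hx : x ∈ stoppingSet a h B n m) :
    dyadicCell a h m x ⊆ stoppingSet a h B n m := by
  intro y hy
  have hcell : ∀ j ≤ m, dyadicCell a h j y = dyadicCell a h j x := fun j hj =>
    dyadicCell_eq_of_mem (dyadicCell_subset_of_le hj hy)
  obtain ⟨hnm, hdense, hsparse⟩ := hx
  refine ⟨hnm, hcell m le_rfl ▸ hdense, fun j hnj hjm => ?_⟩
  rw [hcell j hjm.le]
  exact hsparse j hnj hjm

lemma pairwise_disjoint_stoppingSet : Pairwise (Disjoint on stoppingSet a h B n) := by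
  have key : ∀ m m', m < m' → Disjoint (stoppingSet a h B n m) (stoppingSet a h B n m') :=
    fun m m' hmm' => disjoint_left.mpr fun x hx hx' =>
      (hx'.2.2 m hx.1.le hmm').not_gt hx.2.1
  intro m m' hne
  rcases hne.lt_or_gt with hlt | hlt
  exacts [key m m' hlt, (key m' m hlt).symm]

lemma stoppingSet_subset (hB : B ⊆ dyadicCell a h n x₀) :
    stoppingSet a h B n m ⊆ dyadicCell a h n x₀ := by
  rintro x ⟨hnm, hdense, -⟩
  have hpos : volume (dyadicCell a h m x ∩ B) ≠ 0 := fun h0 => by simp [h0] at hdense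
  obtain ⟨y, hyx, hyB⟩ := nonempty_of_measure_ne_zero hpos
  have hy₀ : dyadicCell a h n y = dyadicCell a h n x₀ := dyadicCell_eq_of_mem (hB hyB)
  rw [← hy₀]
  exact dyadicCell_subset_of_le hnm.le (dyadicCell_eq_of_mem hyx ▸ mem_dyadicCell_self)

lemma measurableSet_iUnion_stoppingSet : MeasurableSet (⋃ m, stoppingSet a h B n m) :=
  MeasurableSet.iUnion fun _ =>
    measurableSet_of_dyadicCell_subset fun _ hx => dyadicCell_subset_stoppingSet hx

lemma volume_diff_iUnion_stoppingSet (hh : 0 < h) (hB : B ⊆ dyadicCell a h n x₀)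
    (hBQ : 2 * volume B ≤ volume (dyadicCell a h n x₀)) :
    volume (B \ ⋃ m, stoppingSet a h B n m) = 0 := by
  classical
  have hae := ae_iff.mp (ae_eventually_volume_lt_two_mul_inter (a := a) hh B)
  refine measure_mono_null ?_ (nonpos_iff_eq_zero.mp ((Measure.le_restrict_apply B _).trans_eq hae))
  rintro x ⟨hxB, hxU⟩
  refine ⟨fun hdense => hxU ?_, hxB⟩
  have hex : ∃ m, n < m ∧
      volume (dyadicCell a h m x) < 2 * volume (dyadicCell a h m x ∩ B) :=
    ((eventually_gt_atTop n).and hdense).exists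
  refine mem_iUnion.mpr ⟨Nat.find hex, (Nat.find_spec hex).1, (Nat.find_spec hex).2,
    fun j hnj hj => ?_⟩
  rcases hnj.eq_or_lt with rfl | hnj
  · rw [dyadicCell_eq_of_mem (hB hxB)]
    exact le_trans (by gcongr; exact inter_subset_right) hBQ
  · exact not_lt.mp fun hd => Nat.find_min hex hj ⟨hnj, hd⟩

lemma volume_iUnion_stoppingSet_le :
    volume (⋃ m, stoppingSet a h B n m) ≤ 2 * volume B :=
  calc volume (⋃ m, stoppingSet a h B n m)
      ≤ ((2 : ℝ≥0∞) • volume.restrict B) (⋃ m, stoppingSet a h B n m) := by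
        refine measure_iUnion_le_of_forall_dyadicCell
          (fun m x hx => dyadicCell_subset_stoppingSet hx) pairwise_disjoint_stoppingSet
          fun m x hx => ?_
        rw [Measure.smul_apply, Measure.restrict_apply measurableSet_dyadicCell, smul_eq_mul]
        exact hx.2.1.le
    _ ≤ 2 * volume B := by
        have hB : volume.restrict B (⋃ m, stoppingSet a h B n m) ≤ volume B :=
          (measure_mono (subset_univ _)).trans_eq (Measure.restrict_apply_univ B)
        rw [Measure.smul_apply, smul_eq_mul]
        gcongr

end Stopping

section Oscillation

variable {X : Type*} [NormedAddCommGroup X] {g : ℝ → X} {c : ℕ → ℝ → X} {s : ℝ}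

lemma norm_sub_le_of_mem_stoppingSet (hh : 0 < h)
    (hq : ∀ m x, 4 * volume {y ∈ dyadicCell a h m x | s < ‖g y - c m x‖}
      ≤ volume (dyadicCell a h m x))
    {x₀ : ℝ} (hx : x ∈ stoppingSet a h {y ∈ dyadicCell a h n x₀ | s < ‖g y - c n x₀‖} n m) :
    ‖c m x - c n x₀‖ ≤ 4 * s := by
  obtain ⟨k, rfl⟩ := Nat.exists_eq_add_one_of_ne_zero (n := m) (by have := hx.1; omega)
  have hnk : n ≤ k := Nat.lt_succ_iff.mp hx.1
  have hxQ := stoppingSet_subset (sep_subset _ _) hx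
  have hPQ : dyadicCell a h k x ⊆ dyadicCell a h n x₀ :=
    dyadicCell_eq_of_mem hxQ ▸ dyadicCell_subset_of_le hnk
  have hPC : ∀ c' : X, {y ∈ dyadicCell a h (k + 1) x | s < ‖g y - c'‖}
      ⊆ {y ∈ dyadicCell a h k x | s < ‖g y - c'‖} :=
    fun c' y hy => ⟨dyadicCell_succ_subset hy.1, hy.2⟩
  have hparent : ‖c k x - c n x₀‖ ≤ s + s := by
    refine norm_sub_le_of_measure_add_lt (add_lt_of_four_mul_le_of_two_mul_le
      (volume_dyadicCell_ne_zero hh) (volume_dyadicCell_ne_top hh) (hq k x) ?_)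
    refine le_trans ?_ (hx.2.2 k hnk k.lt_succ_self)
    gcongr
    exact fun y hy => ⟨hy.1, hPQ hy.1, hy.2⟩
  have hchild : ‖c (k + 1) x - c k x‖ ≤ s + s := by
    refine norm_sub_le_of_measure_add_lt (add_lt_of_four_mul_le_of_two_mul_le
      (volume_dyadicCell_ne_zero hh) (volume_dyadicCell_ne_top hh) (hq (k + 1) x) ?_)
    refine (ENNReal.mul_le_mul_iff_right two_ne_zero ofNat_ne_top).mp ?_
    rw [← mul_assoc, ← volume_dyadicCell_succ hh]
    exact le_trans (mul_le_mul_right (measure_mono (hPC _)) _)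
      ((mul_le_mul_left (by norm_num) _).trans (hq k x))
  calc ‖c (k + 1) x - c n x₀‖ ≤ ‖c (k + 1) x - c k x‖ + ‖c k x - c n x₀‖ :=
        norm_sub_le_norm_sub_add_norm_sub _ _ _
    _ ≤ 4 * s := by linarith

lemma setLIntegral_sdiff_iUnion_stoppingSet_le (hh : 0 < h) {n : ℕ} {x₀ : ℝ} {c₀ : X}
    (hQ : 4 * volume {y ∈ dyadicCell a h n x₀ | s < ‖g y - c₀‖} ≤ volume (dyadicCell a h n x₀)) :
    ∫⁻ y in dyadicCell a h n x₀ \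
        ⋃ m, stoppingSet a h {y ∈ dyadicCell a h n x₀ | s < ‖g y - c₀‖} n m, ‖g y - c₀‖ₑ
      ≤ ENNReal.ofReal s * volume (dyadicCell a h n x₀) := by
  set B := {y ∈ dyadicCell a h n x₀ | s < ‖g y - c₀‖}
  have hnull : volume (B \ ⋃ m, stoppingSet a h B n m) = 0 :=
    volume_diff_iUnion_stoppingSet hh (sep_subset _ _) (le_trans (by gcongr; norm_num) hQ)
  have hae : ∀ᵐ y ∂volume.restrict (dyadicCell a h n x₀ \ ⋃ m, stoppingSet a h B n m),
      ‖g y - c₀‖ₑ ≤ ENNReal.ofReal s := by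
    refine (ae_restrict_iff' (measurableSet_dyadicCell.diff measurableSet_iUnion_stoppingSet)).mpr
      (measure_mono_null (fun y hy => ?_) hnull)
    obtain ⟨⟨hyQ, hyU⟩, hlt⟩ := Classical.not_imp.mp hy
    refine ⟨⟨hyQ, not_le.mp fun hle => hlt ?_⟩, hyU⟩
    rw [← ofReal_norm]
    exact ENNReal.ofReal_le_ofReal hle
  refine (lintegral_mono_ae hae).trans ?_
  rw [setLIntegral_const]
  gcongr
  exact sdiff_subset

lemma setLIntegral_iUnion_stoppingSet_le (hh : 0 < h)
    (hq : ∀ m x, 4 * volume {y ∈ dyadicCell a h m x | s < ‖g y - c m x‖}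
      ≤ volume (dyadicCell a h m x))
    {K : ℝ≥0∞} (hK : ∀ m x, ∫⁻ y in dyadicCell a h m x, ‖g y - c m x‖ₑ
      ≤ K * volume (dyadicCell a h m x))
    (n : ℕ) (x₀ : ℝ) :
    ∫⁻ y in ⋃ m, stoppingSet a h {y ∈ dyadicCell a h n x₀ | s < ‖g y - c n x₀‖} n m,
        ‖g y - c n x₀‖ₑ
      ≤ (K + ENNReal.ofReal (4 * s)) *
        volume (⋃ m, stoppingSet a h {y ∈ dyadicCell a h n x₀ | s < ‖g y - c n x₀‖} n m) := by
  rw [← withDensity_apply _ measurableSet_iUnion_stoppingSet, ← smul_eq_mul, ← Measure.smul_apply]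
  refine measure_iUnion_le_of_forall_dyadicCell
    (fun m x hx => dyadicCell_subset_stoppingSet hx) pairwise_disjoint_stoppingSet
    fun m x hx => ?_
  rw [withDensity_apply _ measurableSet_dyadicCell, Measure.smul_apply, smul_eq_mul, add_mul]
  have hconst : ‖c m x - c n x₀‖ₑ ≤ ENNReal.ofReal (4 * s) := by
    rw [← ofReal_norm]
    exact ENNReal.ofReal_le_ofReal (norm_sub_le_of_mem_stoppingSet hh hq hx)
  calc ∫⁻ y in dyadicCell a h m x, ‖g y - c n x₀‖ₑ
      ≤ ∫⁻ y in dyadicCell a h m x, (‖g y - c m x‖ₑ + ‖c m x - c n x₀‖ₑ) :=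
        lintegral_mono fun y => by
          rw [← sub_add_sub_cancel (g y) (c m x) (c n x₀)]
          exact enorm_add_le _ _
    _ = (∫⁻ y in dyadicCell a h m x, ‖g y - c m x‖ₑ)
          + ‖c m x - c n x₀‖ₑ * volume (dyadicCell a h m x) := by
        rw [lintegral_add_right _ measurable_const, setLIntegral_const]
    _ ≤ _ := by gcongr; exact hK m x

lemma two_mul_setLIntegral_dyadicCell_le (hh : 0 < h) (hs : 0 ≤ s)
    (hq : ∀ m x, 4 * volume {y ∈ dyadicCell a h m x | s < ‖g y - c m x‖}
      ≤ volume (dyadicCell a h m x))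
    {K : ℝ≥0∞} (hK : ∀ m x, ∫⁻ y in dyadicCell a h m x, ‖g y - c m x‖ₑ
      ≤ K * volume (dyadicCell a h m x))
    (n : ℕ) (x₀ : ℝ) :
    2 * ∫⁻ y in dyadicCell a h n x₀, ‖g y - c n x₀‖ₑ
      ≤ (K + ENNReal.ofReal (6 * s)) * volume (dyadicCell a h n x₀) := by
  set Q := dyadicCell a h n x₀
  set B := {y ∈ Q | s < ‖g y - c n x₀‖}
  set U := ⋃ m, stoppingSet a h B n m
  have hBQ : 4 * volume B ≤ volume Q := hq n x₀
  calc 2 * ∫⁻ y in Q, ‖g y - c n x₀‖ₑ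
      ≤ 2 * ((∫⁻ y in Q \ U, ‖g y - c n x₀‖ₑ) + ∫⁻ y in U, ‖g y - c n x₀‖ₑ) := by
        gcongr
        exact (lintegral_mono_set (subset_sdiff_union Q U)).trans (lintegral_union_le _ _ _)
    _ ≤ 2 * (ENNReal.ofReal s * volume Q + (K + ENNReal.ofReal (4 * s)) * (2 * volume B)) := by
        gcongr
        · exact setLIntegral_sdiff_iUnion_stoppingSet_le hh hBQ
        · exact (setLIntegral_iUnion_stoppingSet_le hh hq hK n x₀).trans
            (by gcongr; exact volume_iUnion_stoppingSet_le)
    _ = ENNReal.ofReal (2 * s) * volume Q + (K + ENNReal.ofReal (4 * s)) * (4 * volume B) := by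
        rw [ENNReal.ofReal_mul zero_le_two, ENNReal.ofReal_ofNat]
        ring
    _ ≤ ENNReal.ofReal (2 * s) * volume Q + (K + ENNReal.ofReal (4 * s)) * volume Q := by
        gcongr
    _ = (K + ENNReal.ofReal (6 * s)) * volume Q := by
        rw [show 6 * s = 2 * s + 4 * s by ring, ENNReal.ofReal_add (by positivity) (by positivity)]
        ring

lemma exists_setLIntegral_dyadicCell_le_of_memLp_top (hh : 0 < h) (hg : MemLp g ∞ volume)
    (hq : ∀ m x, 4 * volume {y ∈ dyadicCell a h m x | s < ‖g y - c m x‖}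
      ≤ volume (dyadicCell a h m x)) :
    ∃ K ≠ ∞, ∀ m x, ∫⁻ y in dyadicCell a h m x, ‖g y - c m x‖ₑ
      ≤ K * volume (dyadicCell a h m x) := by
  set M := (eLpNorm g ∞ volume).toReal
  have hM : ∀ᵐ y ∂volume, ‖g y‖ ≤ M := by
    filter_upwards [ae_le_eLpNormEssSup (f := g) (μ := volume)] with y hy
    rw [← eLpNorm_exponent_top, ← ofReal_norm] at hy
    exact (ENNReal.ofReal_le_iff_le_toReal hg.eLpNorm_ne_top).mp hy
  refine ⟨ENNReal.ofReal (2 * M + s), ENNReal.ofReal_ne_top, fun m x => ?_⟩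
  have hc : ‖c m x - 0‖ ≤ s + M := by
    refine norm_sub_le_of_measure_add_lt (add_lt_of_four_mul_le_of_two_mul_le
      (volume_dyadicCell_ne_zero hh) (volume_dyadicCell_ne_top hh) (hq m x) ?_)
    rw [measure_mono_null (fun y hy => not_le.mpr (by simpa using hy.2)) (ae_iff.mp hM), mul_zero]
    exact zero_le
  rw [sub_zero] at hc
  calc ∫⁻ y in dyadicCell a h m x, ‖g y - c m x‖ₑ
      ≤ ∫⁻ _ in dyadicCell a h m x, ENNReal.ofReal (2 * M + s) := by
        refine lintegral_mono_ae (ae_restrict_of_ae ?_)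
        filter_upwards [hM] with y hy
        rw [← ofReal_norm]
        exact ENNReal.ofReal_le_ofReal ((norm_sub_le _ _).trans (by linarith))
    _ = ENNReal.ofReal (2 * M + s) * volume (dyadicCell a h m x) := setLIntegral_const _ _

theorem setLIntegral_dyadicCell_le (hh : 0 < h) (hs : 0 ≤ s) (hg : MemLp g ∞ volume)
    (hq : ∀ m x, 4 * volume {y ∈ dyadicCell a h m x | s < ‖g y - c m x‖}
      ≤ volume (dyadicCell a h m x))
    (m : ℕ) (x : ℝ) :
    ∫⁻ y in dyadicCell a h m x, ‖g y - c m x‖ₑ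
      ≤ ENNReal.ofReal (6 * s) * volume (dyadicCell a h m x) := by
  set A := ⨆ (m : ℕ) (x : ℝ),
    (∫⁻ y in dyadicCell a h m x, ‖g y - c m x‖ₑ) / volume (dyadicCell a h m x)
  have hA : ∀ m x, ∫⁻ y in dyadicCell a h m x, ‖g y - c m x‖ₑ
      ≤ A * volume (dyadicCell a h m x) := fun m x =>
    (ENNReal.div_le_iff (volume_dyadicCell_ne_zero hh) (volume_dyadicCell_ne_top hh)).mp
      (le_iSup₂ (f := fun m x =>
        (∫⁻ y in dyadicCell a h m x, ‖g y - c m x‖ₑ) / volume (dyadicCell a h m x)) m x)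
  obtain ⟨K, hK, hKbound⟩ := exists_setLIntegral_dyadicCell_le_of_memLp_top hh hg hq
  have hA_ne_top : A ≠ ∞ :=
    ne_top_of_le_ne_top hK (iSup₂_le fun m x => ENNReal.div_le_of_le_mul (hKbound m x))
  -- the bootstrap inequality `2 A ≤ A + 6 s`; boundedness of `g` (`A ≠ ∞`) lets us cancel `A`
  have hboot : A + A ≤ A + ENNReal.ofReal (6 * s) := by
    rw [← two_mul, ENNReal.mul_iSup]
    refine iSup_le fun m => ?_
    rw [ENNReal.mul_iSup]
    refine iSup_le fun x => ?_
    rw [← mul_div_assoc]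
    exact ENNReal.div_le_of_le_mul (two_mul_setLIntegral_dyadicCell_le hh hs hq hA m x)
  calc ∫⁻ y in dyadicCell a h m x, ‖g y - c m x‖ₑ ≤ A * volume (dyadicCell a h m x) := hA m x
    _ ≤ ENNReal.ofReal (6 * s) * volume (dyadicCell a h m x) := by
        gcongr
        exact (ENNReal.add_le_add_iff_left hA_ne_top).mp hboot

end Oscillation

lemma exists_dyadicCell_const_of_weakType {X : Type*} [NormedAddCommGroup X] {g : ℝ → X}
    {lam : ℝ} (hh : 0 < h)
    (hw : ∀ l r : ℝ, l < r → ∃ cK : X, ∀ t : ℝ, 0 < t →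
      t * (volume {x : ℝ | x ∈ Icc l r ∧ t < ‖g x - cK‖}).toReal ≤ lam * (r - l)) :
    ∃ c : ℕ → ℝ → X, ∀ s, 0 < s → 4 * lam ≤ s → ∀ m x,
      4 * volume {y ∈ dyadicCell a h m x | s < ‖g y - c m x‖} ≤ volume (dyadicCell a h m x) := by
  set l : ℕ → ℝ → ℝ := fun m x => a + dyadicIndex a h m x * h / 2 ^ m
  set r : ℕ → ℝ → ℝ := fun m x => a + (dyadicIndex a h m x + 1) * h / 2 ^ m
  have hlr : ∀ m x, r m x - l m x = h / 2 ^ m := fun m x => by simp only [l, r]; ring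
  have hcell : ∀ m x, dyadicCell a h m x = Ico (l m x) (r m x) := dyadicCell_eq_Ico hh
  choose c hc using fun m x => hw (l m x) (r m x) (sub_pos.mp (hlr m x ▸ by positivity))
  refine ⟨c, fun s hs hs4 m x => ?_⟩
  set E := {y : ℝ | y ∈ Icc (l m x) (r m x) ∧ s < ‖g y - c m x‖}
  have hE : volume E ≠ ∞ :=
    ne_top_of_le_ne_top measure_Icc_lt_top.ne (measure_mono fun y hy => hy.1)
  have hEle : 4 * (volume E).toReal ≤ r m x - l m x := by
    have := hc m x s hs
    have := hlr m x ▸ (show 0 < h / 2 ^ m by positivity)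
    nlinarith
  calc 4 * volume {y ∈ dyadicCell a h m x | s < ‖g y - c m x‖} ≤ 4 * volume E := by
        gcongr
        exact fun y hy => ⟨Ico_subset_Icc_self (hcell m x ▸ hy.1), hy.2⟩
    _ ≤ volume (dyadicCell a h m x) := by
        rw [hcell, Real.volume_Ico, ← ENNReal.ofReal_toReal hE, ← ENNReal.ofReal_ofNat,
          ← ENNReal.ofReal_mul zero_le_four]
        exact ENNReal.ofReal_le_ofReal hEle

end JohnStromberg

open JohnStromberg

/-- Vector-valued John–Strömberg inequality in dimension one: if for every interval `K`
there is a constant `a_K` with `‖1_K (g - a_K)‖_{L^{1,∞}} ≤ λ |K|`, then the `BMO` norm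
of `g` is at most `C λ` for an absolute constant `C`. -/
theorem stmt19 :
    ∃ C : ℝ, 0 < C ∧
    ∀ (X : Type) [NormedAddCommGroup X] [NormedSpace ℝ X],
    ∀ (g : ℝ → X) (lam : ℝ), 0 ≤ lam → MemLp g ⊤ volume →
      (∀ a b : ℝ, a < b → ∃ cK : X, ∀ t : ℝ, 0 < t →
        t * (volume {x : ℝ | x ∈ Set.Icc a b ∧ t < ‖g x - cK‖}).toReal ≤ lam * (b - a)) →
      ∀ a b : ℝ, a < b → ∃ c : X,
        (∫ x in Set.Icc a b, ‖g x - c‖) ≤ C * lam * (b - a) := by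
  refine ⟨24, by norm_num, fun X _ _ g lam _ hg hw a b hab => ?_⟩
  have hh : 0 < b - a := sub_pos.mpr hab
  obtain ⟨c, hc⟩ := exists_dyadicCell_const_of_weakType (a := a) hh hw
  refine ⟨c 0 a, ?_⟩
  have hbound : ∀ s, 4 * lam < s → ∫ x in Set.Icc a b, ‖g x - c 0 a‖ ≤ 6 * s * (b - a) := by
    intro s hs
    have hs0 : 0 < s := by linarith
    have := setLIntegral_dyadicCell_le hh hs0.le hg (hc s hs0 hs.le) 0 a
    rw [dyadicCell_zero_self hh, add_sub_cancel, Real.volume_Ico,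
      ← ENNReal.ofReal_mul (by positivity)] at this
    rw [integral_Icc_eq_integral_Ico, integral_norm_eq_lintegral_enorm
      (f := fun x => g x - c 0 a)
      (hg.aestronglyMeasurable.sub aestronglyMeasurable_const).restrict]
    exact ENNReal.toReal_le_of_le_ofReal (by positivity) this
  -- a limit rather than `s = 4 λ`, since the hypothesis only gives thresholds `s > 0`
  have hlim : Tendsto (fun s => 6 * s * (b - a)) (𝓝[>] (4 * lam)) (𝓝 (24 * lam * (b - a))) :=
    ((by fun_prop : Continuous fun s : ℝ => 6 * s * (b - a)).tendsto' _ _ (by ring)).mono_left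
      nhdsWithin_le_nhds
  exact ge_of_tendsto hlim (eventually_nhdsWithin_of_forall hbound)
end
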